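/- Let Δt > 0 and let θ : [0, Δt] → ℝ be a C² function with θ''(t) < 0 for all t, θ(0) = 0, θ(Δt) = θ_q where θ_q ∈ (0, π], and θ(t) ∈ [0, θ_q] for all t ∈ [0, Δt]. Then ∫₀^{Δt} cos θ(t) dt < Δt·(sin θ_q)/θ_q. -/

import Mathlib

open Real Set intervalIntegral

/-!
Since `θ'' < 0`, `θ` is strictly concave, so on `(0, Δt)` it lies strictly above its chord
`t ↦ θ_q t / Δt`. Both stay in `[0, π]`, where `cos` is strictly decreasing, so `cos θ` lies
strictly below `cos (θ_q t / Δt)`, whose integral over `[0, Δt]` is `Δt sin θ_q / θ_q`.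
-/

theorem strictConcaveOn_of_hasDerivWithinAt2_neg {D : Set ℝ} (hD : Convex ℝ D)
    {f f' f'' : ℝ → ℝ} (hf : ContinuousOn f D)
    (hf' : ∀ x ∈ interior D, HasDerivWithinAt f (f' x) (interior D) x)
    (hf'' : ∀ x ∈ interior D, HasDerivWithinAt f' (f'' x) (interior D) x)
    (hf''₀ : ∀ x ∈ interior D, f'' x < 0) : StrictConcaveOn ℝ D f := by
  have hderiv : (interior D).EqOn (deriv f) f' := deriv_eqOn isOpen_interior hf'
  refine strictConcaveOn_of_deriv2_neg hD hf fun x hx ↦ ?_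
  have hnhds : interior D ∈ nhds x := isOpen_interior.mem_nhds hx
  have hderiv2 : HasDerivAt (deriv f) (f'' x) x :=
    ((hf'' x hx).hasDerivAt hnhds).congr_of_eventuallyEq (hderiv.eventuallyEq_of_mem hnhds)
  rw [Function.iterate_succ_apply', Function.iterate_one, hderiv2.deriv]
  exact hf''₀ x hx

theorem StrictConcaveOn.div_mul_lt {f : ℝ → ℝ} {b t : ℝ} (hf : StrictConcaveOn ℝ (Icc 0 b) f)
    (h0 : f 0 = 0) (ht : t ∈ Ioo 0 b) : f b / b * t < f t := by
  have hb : 0 ≤ b := ht.1.le.trans ht.2.le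
  have hslope := hf.secant_strict_mono (left_mem_Icc.2 hb) (Ioo_subset_Icc_self ht)
    (right_mem_Icc.2 hb) ht.1.ne' (ht.1.trans ht.2).ne' ht.2
  simp only [h0, sub_zero] at hslope
  exact (lt_div_iff₀ ht.1).1 hslope

theorem integral_lt_integral_of_continuousOn_of_lt_on_Ioo {f g : ℝ → ℝ} {a b : ℝ} (hab : a < b)
    (hf : ContinuousOn f (Icc a b)) (hg : ContinuousOn g (Icc a b))
    (hlt : ∀ x ∈ Ioo a b, f x < g x) : (∫ x in a..b, f x) < ∫ x in a..b, g x := by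
  have hle : ∀ x ∈ Icc a b, f x ≤ g x := by
    rw [← closure_Ioo hab.ne] at hf hg ⊢
    exact le_on_closure (fun x hx ↦ (hlt x hx).le) hf hg
  have hmid : (a + b) / 2 ∈ Ioo a b := ⟨by linarith, by linarith⟩
  exact integral_lt_integral_of_continuousOn_of_le_of_exists_lt hab hf hg
    (fun x hx ↦ hle x (Ioc_subset_Icc_self hx))
    ⟨_, Ioo_subset_Icc_self hmid, hlt _ hmid⟩

theorem integral_cos_div_mul {T φ : ℝ} (hT : T ≠ 0) (hφ : φ ≠ 0) :
    ∫ t in (0 : ℝ)..T, cos (φ / T * t) = T * sin φ / φ := by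
  rw [integral_comp_mul_left cos (div_ne_zero hφ hT), mul_zero, div_mul_cancel₀ φ hT,
    integral_cos, sin_zero, sub_zero, smul_eq_mul]
  field_simp

theorem displacement_upper_bound_general
    (Δt θq : ℝ) (hΔt : 0 < Δt) (θ θ' θ'' : ℝ → ℝ)
    (hd1 : ∀ t ∈ Set.Icc 0 Δt, HasDerivWithinAt θ (θ' t) (Set.Icc 0 Δt) t)
    (hd2 : ∀ t ∈ Set.Icc 0 Δt, HasDerivWithinAt θ' (θ'' t) (Set.Icc 0 Δt) t)
    (hconc : ∀ t ∈ Set.Icc 0 Δt, θ'' t < 0)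
    (h0 : θ 0 = 0) (hq : θ Δt = θq) (hθq : 0 < θq ∧ θq ≤ π)
    (hrange : ∀ t ∈ Set.Icc 0 Δt, θ t ∈ Set.Icc 0 θq) :
    (∫ t in (0 : ℝ)..Δt, Real.cos (θ t)) < Δt * Real.sin θq / θq := by
  obtain ⟨hθq0, hθqπ⟩ := hθq
  have hθc : ContinuousOn θ (Icc 0 Δt) := fun t ht ↦ (hd1 t ht).continuousWithinAt
  have hconcave : StrictConcaveOn ℝ (Icc 0 Δt) θ :=
    strictConcaveOn_of_hasDerivWithinAt2_neg (convex_Icc 0 Δt) hθc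
      (fun t ht ↦ (hd1 t (interior_subset ht)).mono interior_subset)
      (fun t ht ↦ (hd2 t (interior_subset ht)).mono interior_subset)
      (fun t ht ↦ hconc t (interior_subset ht))
  have hcos : ∀ t ∈ Ioo 0 Δt, cos (θ t) < cos (θq / Δt * t) := fun t ht ↦
    cos_lt_cos_of_nonneg_of_le_pi (mul_nonneg (div_nonneg hθq0.le hΔt.le) ht.1.le)
      ((hrange t (Ioo_subset_Icc_self ht)).2.trans hθqπ) (hq ▸ hconcave.div_mul_lt h0 ht)
  calc (∫ t in (0 : ℝ)..Δt, cos (θ t))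
      < ∫ t in (0 : ℝ)..Δt, cos (θq / Δt * t) :=
        integral_lt_integral_of_continuousOn_of_lt_on_Ioo hΔt
          (continuous_cos.comp_continuousOn hθc) (by fun_prop) hcos
    _ = Δt * sin θq / θq := integral_cos_div_mul hΔt.ne' hθq0.ne'

/-- For a C² angle function `θ` on `[0, Δt]` with `θ'' < 0`,
`θ(0) = 0`, `θ(Δt) = θ_q ∈ (0, π]` and `θ` taking values in `[0, θ_q]`,
the total horizontal displacement satisfies
`∫₀^Δt cos θ(t) dt < Δt (sin θ_q)/θ_q`. -/
theorem displacement_upper_bound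
    (Δt θq : ℝ) (hΔt : 0 < Δt) (θ θ' θ'' : ℝ → ℝ)
    (hd1 : ∀ t ∈ Set.Icc 0 Δt, HasDerivWithinAt θ (θ' t) (Set.Icc 0 Δt) t)
    (hd2 : ∀ t ∈ Set.Icc 0 Δt, HasDerivWithinAt θ' (θ'' t) (Set.Icc 0 Δt) t)
    (hcont : ContinuousOn θ'' (Set.Icc 0 Δt))
    (hconc : ∀ t ∈ Set.Icc 0 Δt, θ'' t < 0)
    (h0 : θ 0 = 0) (hq : θ Δt = θq) (hθq : 0 < θq ∧ θq ≤ π)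
    (hrange : ∀ t ∈ Set.Icc 0 Δt, θ t ∈ Set.Icc 0 θq) :
    (∫ t in (0 : ℝ)..Δt, Real.cos (θ t)) < Δt * Real.sin θq / θq :=
  displacement_upper_bound_general Δt θq hΔt θ θ' θ'' hd1 hd2 hconc h0 hq hθq hrange
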